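/- Let L be a 0-homogeneous tree language, α a symbol in Σ and b ∈ Σ₀. Then α⁻¹(L^{*_b}) = (b⁻¹(L))^⊛ ·_b L^{*_b} if α = b, and α⁻¹(L^{*_b}) = ((b⁻¹(L))^⊛ ∘ α⁻¹(L)) ·_b L^{*_b} otherwise. -/

import Mathlib

inductive GTree (S : Type) (ar : S → ℕ) : Type where
  | eps (x : ℕ) : GTree S ar
  | node (f : S) (ts : Fin (ar f) → GTree S ar) : GTree S ar

namespace GTree

variable {S : Type} {ar : S → ℕ}

/-- Substitute each ε-symbol `ε_x` by `σ x`. -/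
def subst (σ : ℕ → GTree S ar) : GTree S ar → GTree S ar
  | eps x => σ x
  | node f ts => node f (fun i => subst σ (ts i))

/-- The multiset of ε-indices of a tree. -/
def epsIdx : GTree S ar → Multiset ℕ
  | eps x => {x}
  | node _ ts => ∑ i, epsIdx (ts i)

/-- `Inc_ε(z,t)`: increment every ε-index by `z`. -/
def inc (z : ℕ) (t : GTree S ar) : GTree S ar :=
  subst (fun x => eps (x + z)) t

/-- Composition `t ∘ (t₁,…,t_k)`: graft `ts_j` at the `j`-th smallest ε-index of `t`. -/
def compo (t : GTree S ar) (ts : List (GTree S ar)) : GTree S ar :=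
  subst (fun x => ts.getD ((Multiset.sort (epsIdx t) (· ≤ ·)).idxOf x) (eps x)) t

/-- The tree `α(ε₁,…,ε_k)` associated with a symbol `α`. -/
def symTree (f : S) : GTree S ar := node f (fun i => eps (i.1 + 1))

/-- Bottom-up quotient `d⁻¹(t)` of a tree `t` w.r.t. a tree `d`. -/
def quotT (d t : GTree S ar) : Set (GTree S ar) :=
  { u | epsIdx u = 1 ::ₘ (epsIdx t - epsIdx d).map (· + 1) ∧
        subst (fun j => if j = 1 then d else eps (j - 1)) u = t }

/-- Bottom-up quotient `d⁻¹(L)` of a language w.r.t. a tree. -/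
def quotL (d : GTree S ar) (L : Set (GTree S ar)) : Set (GTree S ar) :=
  ⋃ t ∈ L, quotT d t

def incL (z : ℕ) (L : Set (GTree S ar)) : Set (GTree S ar) := inc z '' L

/-- Composition of languages `L ∘ (L₁,…,L_k)`. -/
def compoL (L : Set (GTree S ar)) (Ls : List (Set (GTree S ar))) : Set (GTree S ar) :=
  { u | ∃ t ∈ L, ∃ ts : List (GTree S ar), List.Forall₂ (· ∈ ·) ts Ls ∧ u = compo t ts }

/-- Partial composition `t ∘₁ L'` at the first (smallest) ε-index. -/
def pcomp (t : GTree S ar) (L' : Set (GTree S ar)) : Set (GTree S ar) :=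
  { u | ∃ t' ∈ L', u = compo t (t' :: ((Multiset.sort (epsIdx t) (· ≤ ·)).tail).map eps) }

/-- Partial composition of languages `L ∘₁ L'`. -/
def pcompL (L L' : Set (GTree S ar)) : Set (GTree S ar) := ⋃ t ∈ L, pcomp t L'

/-- Tree substitution `t_{b ← L}` of the 0-ary symbol `b` by the language `L`. -/
def bsub [DecidableEq S] (b : S) (L : Set (GTree S ar)) : GTree S ar → Set (GTree S ar)
  | eps x => {eps x}
  | node f ts =>
      if f = b then L
      else { u | ∃ us : Fin (ar f) → GTree S ar, (∀ i, us i ∈ bsub b L (ts i)) ∧ u = node f us }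

/-- `b`-product `L₁ ·_b L₂`. -/
def prodB [DecidableEq S] (L₁ : Set (GTree S ar)) (b : S) (L₂ : Set (GTree S ar)) :
    Set (GTree S ar) :=
  ⋃ t ∈ L₁, bsub b L₂ t

/-- Iterated `b`-product `L^{n_b}`. -/
def iterB [DecidableEq S] (b : S) (L : Set (GTree S ar)) : ℕ → Set (GTree S ar)
  | 0 => {symTree b}
  | n + 1 => iterB b L n ∪ prodB L b (iterB b L n)

/-- `b`-closure `L^{*_b}`. -/
def closB [DecidableEq S] (b : S) (L : Set (GTree S ar)) : Set (GTree S ar) :=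
  ⋃ n, iterB b L n

/-- Iterated composition `L^{n∘}` of a 1-homogeneous language of ε-index `{x}`. -/
def iterC (x : ℕ) (L : Set (GTree S ar)) : ℕ → Set (GTree S ar)
  | 0 => {eps x}
  | n + 1 => iterC x L n ∪ pcompL (iterC x L n) L

/-- Composition closure `L^⊛`. -/
def closC (x : ℕ) (L : Set (GTree S ar)) : Set (GTree S ar) := ⋃ n, iterC x L n

end GTree


namespace GTree

variable {S : Type} {ar : S → ℕ}

theorem epsIdx_node (f : S) (ts : Fin (ar f) → GTree S ar) :
    epsIdx (node f ts) = ∑ i, epsIdx (ts i) := rfl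

theorem mem_epsIdx_node {f : S} {ts : Fin (ar f) → GTree S ar} {x : ℕ} :
    x ∈ epsIdx (node f ts) ↔ ∃ i, x ∈ epsIdx (ts i) := by
  rw [epsIdx_node, Multiset.mem_sum]; simp

theorem subst_congr {σ τ : ℕ → GTree S ar} :
    ∀ {t : GTree S ar}, (∀ x ∈ epsIdx t, σ x = τ x) → subst σ t = subst τ t
  | eps x, h => h x (by simp [epsIdx])
  | node f ts, h => by
      simp only [subst]
      congr 1; funext i
      exact subst_congr (fun x hx => h x (mem_epsIdx_node.mpr ⟨i, hx⟩))

theorem subst_eps : ∀ t : GTree S ar, subst eps t = t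
  | eps x => rfl
  | node f ts => by simp only [subst]; congr 1; funext i; exact subst_eps (ts i)

theorem subst_closed {σ : ℕ → GTree S ar} {t : GTree S ar} (h : epsIdx t = 0) :
    subst σ t = t := by
  rw [subst_congr (τ := eps) (fun x hx => by rw [h] at hx; simp at hx), subst_eps]

theorem subst_subst (σ τ : ℕ → GTree S ar) :
    ∀ t : GTree S ar, subst σ (subst τ t) = subst (fun x => subst σ (τ x)) t
  | eps x => rfl
  | node f ts => by simp only [subst]; congr 1; funext i; exact subst_subst σ τ (ts i)

theorem multiset_map_finsum {k : ℕ} (m : Fin k → Multiset ℕ) (g : ℕ → Multiset ℕ) :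
    (Multiset.map g (∑ i, m i)) = ∑ i, Multiset.map g (m i) :=
  map_sum (Multiset.mapAddMonoidHom g) m Finset.univ

theorem multiset_sum_finsum {k : ℕ} (m : Fin k → Multiset (Multiset ℕ)) :
    (∑ i, m i).sum = ∑ i, (m i).sum :=
  map_sum Multiset.sumAddMonoidHom m Finset.univ

theorem epsIdx_subst (σ : ℕ → GTree S ar) :
    ∀ t : GTree S ar, epsIdx (subst σ t) = ((epsIdx t).map fun x => epsIdx (σ x)).sum
  | eps x => by simp [subst, epsIdx]
  | node f ts => by
      simp only [subst, epsIdx_node, multiset_map_finsum, multiset_sum_finsum]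
      exact Finset.sum_congr rfl fun i _ => epsIdx_subst σ (ts i)

/-- `plug v t` replaces `ε₁` in `t` by `v` (and keeps other ε's). -/
def plug (v t : GTree S ar) : GTree S ar :=
  subst (fun j => if j = 1 then v else eps j) t

theorem plug_eps (v : GTree S ar) (x : ℕ) :
    plug v (eps x) = if x = 1 then v else eps x := rfl

theorem plug_eps_one (v : GTree S ar) : plug v (eps 1) = v := by simp [plug_eps]

theorem plug_node (v : GTree S ar) (f : S) (ts : Fin (ar f) → GTree S ar) :
    plug v (node f ts) = node f (fun i => plug v (ts i)) := rfl

theorem eps_one_plug : ∀ t : GTree S ar, plug (eps 1) t = t := by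
  intro t
  have : (fun j => if j = 1 then (eps 1 : GTree S ar) else eps j) = eps := by
    funext j; split <;> simp_all
  rw [plug, this, subst_eps]

theorem plug_plug (v w t : GTree S ar) : plug v (plug w t) = plug (plug v w) t := by
  rw [plug, plug, subst_subst]
  refine subst_congr fun x _ => ?_
  by_cases hx : x = 1 <;> simp [hx, plug, subst]

theorem plug_closed {v t : GTree S ar} (h : epsIdx t = 0) : plug v t = t :=
  subst_closed h

theorem epsIdx_plug {t : GTree S ar} (v : GTree S ar) (h : epsIdx t = {1}) :
    epsIdx (plug v t) = epsIdx v := by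
  rw [plug, epsIdx_subst, h]; simp

theorem fil_eq_plug {d u : GTree S ar} (h : epsIdx u = {1}) :
    subst (fun j => if j = 1 then d else eps (j - 1)) u = plug d u := by
  refine subst_congr fun x hx => ?_
  rw [h] at hx; simp at hx; simp [hx]

theorem sum_eq_singleton {k : ℕ} {m : Fin k → Multiset ℕ} {a : ℕ} (h : ∑ i, m i = {a}) :
    ∃ i₀, m i₀ = {a} ∧ ∀ i, i ≠ i₀ → m i = 0 := by
  classical
  have hcard : ∑ i, Multiset.card (m i) = 1 := by
    have h2 := map_sum (⟨⟨Multiset.card, Multiset.card_zero⟩, Multiset.card_add⟩ : Multiset ℕ →+ ℕ) m Finset.univ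
    simp only [AddMonoidHom.coe_mk, ZeroHom.coe_mk] at h2
    rw [← h2, h, Multiset.card_singleton]
  have hex : ∃ i₀, m i₀ ≠ 0 := by
    by_contra hall
    push_neg at hall
    rw [Finset.sum_eq_zero (fun i _ => hall i)] at h
    exact Multiset.singleton_ne_zero a h.symm
  obtain ⟨i₀, hi₀⟩ := hex
  have h1 : 1 ≤ Multiset.card (m i₀) := Multiset.card_pos.mpr hi₀
  have hrest : ∑ i ∈ Finset.univ.erase i₀, Multiset.card (m i) = 0 := by
    have := Finset.add_sum_erase Finset.univ (fun i => Multiset.card (m i)) (Finset.mem_univ i₀)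
    omega
  have hz : ∀ i, i ≠ i₀ → m i = 0 := by
    intro i hi
    have := (Finset.sum_eq_zero_iff).mp hrest i (Finset.mem_erase.mpr ⟨hi, Finset.mem_univ i⟩)
    exact Multiset.card_eq_zero.mp this
  refine ⟨i₀, ?_, hz⟩
  rw [← h, Finset.sum_eq_single i₀ (fun i _ hi => hz i hi) (by simp)]

end GTree
namespace GTree

variable {S : Type} {ar : S → ℕ}

theorem node_inj {f g : S} {ts : Fin (ar f) → GTree S ar} {us : Fin (ar g) → GTree S ar}
    (h : node f ts = node g us) : f = g ∧ HEq ts us := by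
  injection h with h1 h2; exact ⟨h1, h2⟩

theorem epsIdx_node_zero {b : S} (hb : ar b = 0) (ts : Fin (ar b) → GTree S ar) :
    epsIdx (node b ts) = 0 := by
  rw [epsIdx_node]
  exact Finset.sum_eq_zero fun i _ => absurd i.isLt (by omega)

theorem node_eq_symTree {b : S} (hb : ar b = 0) (ts : Fin (ar b) → GTree S ar) :
    node b ts = symTree b := by
  unfold symTree; congr 1; funext i; exact absurd i.isLt (by omega)

theorem epsIdx_symTree_zero {b : S} (hb : ar b = 0) : epsIdx (symTree b : GTree S ar) = 0 :=
  epsIdx_node_zero hb _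

theorem epsIdx_update {f : S} {ts : Fin (ar f) → GTree S ar} {i₀ : Fin (ar f)}
    {a : GTree S ar} (ha : epsIdx a = {1}) (hts : ∀ i, i ≠ i₀ → epsIdx (ts i) = 0) :
    epsIdx (node f (Function.update ts i₀ a)) = {1} := by
  classical
  rw [epsIdx_node, Finset.sum_eq_single i₀
    (fun i _ hi => by rw [Function.update_of_ne hi]; exact hts i hi) (by simp)]
  rw [Function.update_self]; exact ha

section bsub
variable [DecidableEq S] {b : S} {Y Y' : Set (GTree S ar)}

theorem bsub_eps (x : ℕ) : bsub b Y (eps x) = {eps x} := rfl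

theorem mem_bsub_node_iff {f : S} (hf : f ≠ b) {ts : Fin (ar f) → GTree S ar}
    {u : GTree S ar} :
    u ∈ bsub b Y (node f ts) ↔ ∃ us, (∀ i, us i ∈ bsub b Y (ts i)) ∧ u = node f us := by
  simp [bsub, hf]

theorem bsub_node_b {ts : Fin (ar b) → GTree S ar} : bsub b Y (node b ts) = Y := by
  simp [bsub]

theorem bsub_mono (h : Y ⊆ Y') : ∀ t : GTree S ar, bsub b Y t ⊆ bsub b Y' t
  | eps x => le_refl _
  | node f ts => by
      by_cases hf : f = b
      · subst hf; rw [bsub_node_b, bsub_node_b]; exact h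
      · rintro u hu
        obtain ⟨us, hus, rfl⟩ := (mem_bsub_node_iff hf).mp hu
        exact (mem_bsub_node_iff hf).mpr ⟨us, fun i => bsub_mono h (ts i) (hus i), rfl⟩

theorem bsub_epsIdx (hb : ar b = 0) (hY : ∀ y ∈ Y, epsIdx y = 0) :
    ∀ t : GTree S ar, ∀ u ∈ bsub b Y t, epsIdx u = epsIdx t
  | eps x, u, hu => by rw [bsub_eps] at hu; rw [hu]
  | node f ts, u, hu => by
      by_cases hf : f = b
      · subst hf
        rw [bsub_node_b] at hu
        rw [hY u hu, epsIdx_node_zero hb]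
      · obtain ⟨us, hus, rfl⟩ := (mem_bsub_node_iff hf).mp hu
        rw [epsIdx_node, epsIdx_node]
        exact Finset.sum_congr rfl fun i _ => bsub_epsIdx hb hY (ts i) (us i) (hus i)

theorem self_mem_bsub (hb : ar b = 0) (hY : symTree b ∈ Y) :
    ∀ t : GTree S ar, t ∈ bsub b Y t
  | eps x => by rw [bsub_eps]; rfl
  | node f ts => by
      by_cases hf : f = b
      · subst hf; rw [bsub_node_b, node_eq_symTree hb]; exact hY
      · exact (mem_bsub_node_iff hf).mpr ⟨ts, fun i => self_mem_bsub hb hY (ts i), rfl⟩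

theorem bsub_iUnion {X : ℕ → Set (GTree S ar)} (hX : Monotone X) :
    ∀ t : GTree S ar, ∀ u ∈ bsub b (⋃ n, X n) t, ∃ n, u ∈ bsub b (X n) t
  | eps x, u, hu => ⟨0, hu⟩
  | node f ts, u, hu => by
      classical
      by_cases hf : f = b
      · subst hf
        rw [bsub_node_b] at hu
        obtain ⟨n, hn⟩ := Set.mem_iUnion.mp hu
        exact ⟨n, by rw [bsub_node_b]; exact hn⟩
      · obtain ⟨us, hus, rfl⟩ := (mem_bsub_node_iff hf).mp hu
        choose n hn using fun i => bsub_iUnion hX (ts i) (us i) (hus i)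
        refine ⟨Finset.univ.sup n, (mem_bsub_node_iff hf).mpr ⟨us, fun i => ?_, rfl⟩⟩
        exact bsub_mono (hX (Finset.le_sup (Finset.mem_univ i))) (ts i) (hn i)

/-- B1 : composing `bsub`-members. -/
theorem plug_mem_bsub (hb : ar b = 0) (hY : ∀ y ∈ Y, epsIdx y = 0) :
    ∀ w : GTree S ar, ∀ w' ∈ bsub b Y w, ∀ v v' : GTree S ar, v' ∈ bsub b Y v →
      plug v' w' ∈ bsub b Y (plug v w)
  | eps x, w', hw', v, v', hv' => by
      rw [bsub_eps] at hw'; rw [hw']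
      by_cases hx : x = 1
      · subst hx; rw [plug_eps_one, plug_eps_one]; exact hv'
      · rw [plug_eps, plug_eps, if_neg hx, if_neg hx, bsub_eps]; rfl
  | node f ws, w', hw', v, v', hv' => by
      by_cases hf : f = b
      · subst hf
        rw [bsub_node_b] at hw'
        rw [plug_closed (hY w' hw'), plug_node, bsub_node_b]
        exact hw'
      · obtain ⟨ws', hws', rfl⟩ := (mem_bsub_node_iff hf).mp hw'
        rw [plug_node, plug_node]
        exact (mem_bsub_node_iff hf).mpr
          ⟨fun i => plug v' (ws' i),
           fun i => plug_mem_bsub hb hY (ws i) (ws' i) (hws' i) v v' hv', rfl⟩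

/-- B2 : decomposing `bsub`-members of a plugged tree. -/
theorem bsub_plug_elim (hb : ar b = 0) (hY : ∀ y ∈ Y, epsIdx y = 0) :
    ∀ w : GTree S ar, epsIdx w = {1} → ∀ v u : GTree S ar, u ∈ bsub b Y (plug v w) →
      ∃ w' ∈ bsub b Y w, ∃ v' ∈ bsub b Y v, u = plug v' w'
  | eps x, hw, v, u, hu => by
      have hx : x = 1 := by simpa [epsIdx] using hw
      subst hx
      rw [plug_eps_one] at hu
      exact ⟨eps 1, by rw [bsub_eps]; rfl, u, hu, (plug_eps_one u).symm⟩
  | node f ws, hw, v, u, hu => by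
      classical
      by_cases hf : f = b
      · subst hf
        rw [epsIdx_node_zero hb] at hw
        exact absurd hw.symm (Multiset.singleton_ne_zero 1)
      · rw [plug_node] at hu
        obtain ⟨us, hus, rfl⟩ := (mem_bsub_node_iff hf).mp hu
        rw [epsIdx_node] at hw
        obtain ⟨i₀, hi₀, hz⟩ := sum_eq_singleton hw
        have hother : ∀ i, i ≠ i₀ → us i ∈ bsub b Y (ws i) := by
          intro i hi
          have := hus i
          rwa [plug_closed (hz i hi)] at this
        have hclosed : ∀ i, i ≠ i₀ → epsIdx (us i) = 0 := fun i hi =>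
          (bsub_epsIdx hb hY (ws i) (us i) (hother i hi)).trans (hz i hi)
        obtain ⟨w₀, hw₀, v', hv', heq⟩ :=
          bsub_plug_elim hb hY (ws i₀) hi₀ v (us i₀) (hus i₀)
        refine ⟨node f (Function.update us i₀ w₀),
          (mem_bsub_node_iff hf).mpr ⟨Function.update us i₀ w₀, fun i => ?_, rfl⟩,
          v', hv', ?_⟩
        · by_cases hi : i = i₀
          · subst hi; rw [Function.update_self]; exact hw₀
          · rw [Function.update_of_ne hi]; exact hother i hi
        · rw [plug_node]
          congr 1; funext i
          by_cases hi : i = i₀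
          · subst hi; rw [Function.update_self]; exact heq
          · rw [Function.update_of_ne hi, plug_closed (hclosed i hi)]
end bsub
end GTree
namespace GTree

variable {S : Type} {ar : S → ℕ}

theorem mem_quotL_closed {d : GTree S ar} {X : Set (GTree S ar)}
    (hX : ∀ t ∈ X, epsIdx t = 0) {u : GTree S ar} :
    u ∈ quotL d X ↔ epsIdx u = {1} ∧ plug d u ∈ X := by
  constructor
  · rintro hu
    simp only [quotL, Set.mem_iUnion] at hu
    obtain ⟨t, ht, h1, h2⟩ := hu
    rw [hX t ht, zero_tsub, Multiset.map_zero] at h1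
    refine ⟨h1, ?_⟩
    rw [← fil_eq_plug h1, h2]; exact ht
  · rintro ⟨h1, h2⟩
    simp only [quotL, Set.mem_iUnion]
    refine ⟨plug d u, h2, ?_, fil_eq_plug h1⟩
    rw [hX _ h2, zero_tsub, Multiset.map_zero, h1]; rfl

section closB
variable [DecidableEq S] {b : S} {L : Set (GTree S ar)}

theorem iterB_mono : Monotone (iterB b L) :=
  monotone_nat_of_le_succ fun n => Set.subset_union_left

theorem iterB_subset_closB (n : ℕ) : iterB b L n ⊆ closB b L :=
  Set.subset_iUnion (iterB b L) n

theorem symTree_mem_iterB (n : ℕ) : symTree b ∈ iterB b L n := by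
  induction n with
  | zero => rfl
  | succ n ih => exact Set.mem_union_left _ ih

theorem symTree_mem_closB : symTree b ∈ closB b L :=
  iterB_subset_closB 0 rfl

theorem iterB_closed (hb : ar b = 0) (hL : ∀ t ∈ L, epsIdx t = 0) :
    ∀ n, ∀ t ∈ iterB b L n, epsIdx t = 0 := by
  intro n
  induction n with
  | zero => rintro t ht; rw [Set.mem_singleton_iff.mp ht]; exact epsIdx_symTree_zero hb
  | succ n ih =>
      rintro t (ht | ht)
      · exact ih t ht
      · simp only [prodB, Set.mem_iUnion] at ht
        obtain ⟨l, hl, ht⟩ := ht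
        rw [bsub_epsIdx hb ih l t ht]
        exact hL l hl

theorem closB_closed (hb : ar b = 0) (hL : ∀ t ∈ L, epsIdx t = 0) :
    ∀ t ∈ closB b L, epsIdx t = 0 := by
  rintro t ht
  obtain ⟨n, hn⟩ := Set.mem_iUnion.mp ht
  exact iterB_closed hb hL n t hn

theorem bsub_closB_subset {l : GTree S ar} (hl : l ∈ L) :
    bsub b (closB b L) l ⊆ closB b L := by
  intro u hu
  obtain ⟨n, hn⟩ := bsub_iUnion iterB_mono l u hu
  refine iterB_subset_closB (n + 1) (Set.mem_union_right _ ?_)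
  simp only [prodB, Set.mem_iUnion]
  exact ⟨l, hl, hn⟩

end closB

section closC
variable {M : Set (GTree S ar)}

theorem mem_pcomp_iff {t : GTree S ar} (ht : epsIdx t = {1}) {L' : Set (GTree S ar)}
    {u : GTree S ar} : u ∈ pcomp t L' ↔ ∃ v ∈ L', u = plug v t := by
  have hsort : Multiset.sort (epsIdx t) (· ≤ ·) = [1] := by
    rw [ht]; exact Multiset.sort_singleton 1 _
  have hcompo : ∀ v : GTree S ar,
      compo t (v :: (Multiset.sort (epsIdx t) (· ≤ ·)).tail.map eps) = plug v t := by
    intro v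
    rw [hsort]
    show compo t [v] = plug v t
    refine subst_congr fun x hx => ?_
    rw [ht] at hx
    simp at hx
    subst hx
    simp [hsort]
  constructor
  · rintro ⟨v, hv, rfl⟩; exact ⟨v, hv, hcompo v⟩
  · rintro ⟨v, hv, rfl⟩; exact ⟨v, hv, (hcompo v).symm⟩

theorem iterC_epsIdx (hM : ∀ m ∈ M, epsIdx m = {1}) :
    ∀ n, ∀ c ∈ iterC 1 M n, epsIdx c = {1} := by
  intro n
  induction n with
  | zero => rintro c hc; rw [Set.mem_singleton_iff.mp hc]; rfl
  | succ n ih =>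
      rintro c (hc | hc)
      · exact ih c hc
      · simp only [pcompL, Set.mem_iUnion] at hc
        obtain ⟨t, htC, hc⟩ := hc
        obtain ⟨m, hm, rfl⟩ := (mem_pcomp_iff (ih t htC)).mp hc
        rw [epsIdx_plug m (ih t htC)]
        exact hM m hm

theorem closC_epsIdx (hM : ∀ m ∈ M, epsIdx m = {1}) :
    ∀ c ∈ closC 1 M, epsIdx c = {1} := by
  rintro c hc
  obtain ⟨n, hn⟩ := Set.mem_iUnion.mp hc
  exact iterC_epsIdx hM n c hn

theorem iterC_subset_closC (n : ℕ) : iterC 1 M n ⊆ closC 1 M :=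
  Set.subset_iUnion (iterC 1 M) n

theorem eps_one_mem_closC : eps 1 ∈ closC 1 M := iterC_subset_closC 0 rfl

theorem plug_mem_iterC (hM : ∀ m ∈ M, epsIdx m = {1}) {c : GTree S ar} {n : ℕ}
    (hc : c ∈ iterC 1 M n) {m : GTree S ar} (hm : m ∈ M) :
    plug m c ∈ iterC 1 M (n + 1) := by
  refine Set.mem_union_right _ ?_
  simp only [pcompL, Set.mem_iUnion]
  exact ⟨c, hc, (mem_pcomp_iff (iterC_epsIdx hM n c hc)).mpr ⟨m, hm, rfl⟩⟩

theorem plug_mem_closC (hM : ∀ m ∈ M, epsIdx m = {1}) {c : GTree S ar}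
    (hc : c ∈ closC 1 M) {m : GTree S ar} (hm : m ∈ M) :
    plug m c ∈ closC 1 M := by
  obtain ⟨n, hn⟩ := Set.mem_iUnion.mp hc
  exact iterC_subset_closC (n + 1) (plug_mem_iterC hM hn hm)

theorem M_subset_closC (hM : ∀ m ∈ M, epsIdx m = {1}) : M ⊆ closC 1 M := by
  intro m hm
  have := plug_mem_closC hM eps_one_mem_closC hm
  rwa [plug_eps_one] at this

theorem plug_closC_mem (hM : ∀ m ∈ M, epsIdx m = {1}) :
    ∀ n, ∀ c' ∈ iterC 1 M n, ∀ c ∈ closC 1 M, plug c' c ∈ closC 1 M := by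
  intro n
  induction n with
  | zero =>
      rintro c' hc' c hc
      rw [Set.mem_singleton_iff.mp hc', eps_one_plug]
      exact hc
  | succ n ih =>
      rintro c' (hc' | hc') c hc
      · exact ih c' hc' c hc
      · simp only [pcompL, Set.mem_iUnion] at hc'
        obtain ⟨c'', hc'', hm⟩ := hc'
        obtain ⟨m, hmM, rfl⟩ := (mem_pcomp_iff (iterC_epsIdx hM n c'' hc'')).mp hm
        rw [← plug_plug]
        exact plug_mem_closC hM (ih c'' hc'' c hc) hmM

theorem plug_closC_mem' (hM : ∀ m ∈ M, epsIdx m = {1}) {c' c : GTree S ar}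
    (hc' : c' ∈ closC 1 M) (hc : c ∈ closC 1 M) : plug c' c ∈ closC 1 M := by
  obtain ⟨n, hn⟩ := Set.mem_iUnion.mp hc'
  exact plug_closC_mem hM n c' hn c hc

end closC
end GTree
namespace GTree

variable {S : Type} {ar : S → ℕ} [DecidableEq S] {b : S} {L : Set (GTree S ar)}

theorem symTree_bsub : bsub b L (symTree b : GTree S ar) = L := by
  rw [symTree]; exact bsub_node_b

/-- Key lemma: plugging a closed `closB`-member into the hole of a `bsub`-expansion
of a chain yields a `closB`-member. -/
theorem plug_bsub_closB (hb : ar b = 0) (hL : ∀ t ∈ L, epsIdx t = 0) :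
    ∀ n, ∀ c ∈ iterC 1 (quotL (symTree b) L) n, ∀ w ∈ bsub b (closB b L) c,
      ∀ t₀ ∈ closB b L, plug t₀ w ∈ closB b L := by
  have hY : ∀ y ∈ closB b L, epsIdx y = 0 := closB_closed hb hL
  have hM : ∀ m ∈ quotL (symTree b) L, epsIdx m = {1} :=
    fun m hm => ((mem_quotL_closed hL).mp hm).1
  intro n
  induction n with
  | zero =>
      rintro c hc w hw t₀ ht₀
      rw [Set.mem_singleton_iff.mp hc, bsub_eps] at hw
      rw [Set.mem_singleton_iff.mp hw, plug_eps_one]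
      exact ht₀
  | succ n ih =>
      rintro c (hc | hc) w hw t₀ ht₀
      · exact ih c hc w hw t₀ ht₀
      · simp only [pcompL, Set.mem_iUnion] at hc
        obtain ⟨c', hc', hcp⟩ := hc
        obtain ⟨m, hm, rfl⟩ :=
          (mem_pcomp_iff (iterC_epsIdx hM n c' hc')).mp hcp
        obtain ⟨w', hw', v, hv, rfl⟩ :=
          bsub_plug_elim hb hY c' (iterC_epsIdx hM n c' hc') m w hw
        rw [plug_plug]
        refine ih c' hc' w' hw' (plug t₀ v) ?_
        have hmem : plug t₀ v ∈ bsub b (closB b L) (plug (symTree b) m) := by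
          refine plug_mem_bsub hb hY m v hv (symTree b) t₀ ?_
          rw [symTree_bsub]; exact ht₀
        exact bsub_closB_subset ((mem_quotL_closed hL).mp hm).2 hmem

/-- Main decomposition lemma (A''). -/
theorem bsub_decomp (hb : ar b = 0) {Y : Set (GTree S ar)}
    (hY : ∀ y ∈ Y, epsIdx y = 0) (α : S) :
    ∀ l : GTree S ar, epsIdx l = 0 → ∀ u : GTree S ar, epsIdx u = {1} →
      plug (symTree α) u ∈ bsub b Y l →
      (∃ a, epsIdx a = {1} ∧ plug (symTree α) a = l ∧ u ∈ bsub b Y a) ∨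
      (∃ m, epsIdx m = {1} ∧ plug (symTree b) m = l ∧
        ∃ w ∈ bsub b Y m, ∃ v, epsIdx v = {1} ∧ plug (symTree α) v ∈ Y ∧ u = plug v w)
  | eps x, hl, u, hu, hmem => by
      exact absurd hl (Multiset.singleton_ne_zero x)
  | node f ts, hl, u, hu, hmem => by
      classical
      by_cases hf : f = b
      · subst hf
        right
        rw [bsub_node_b] at hmem
        refine ⟨eps 1, rfl, ?_, eps 1, by rw [bsub_eps]; rfl, u, hu, hmem, ?_⟩
        · rw [plug_eps_one, node_eq_symTree hb]
        · rw [plug_eps_one]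
      · rw [epsIdx_node] at hl
        have hts0 : ∀ i, epsIdx (ts i) = 0 := fun i =>
          (Finset.sum_eq_zero_iff).mp hl i (Finset.mem_univ i)
        obtain ⟨rs, hrs, heq⟩ := (mem_bsub_node_iff hf).mp hmem
        cases u with
        | eps x =>
            have hx : x = 1 := by simpa [epsIdx] using hu
            subst hx
            rw [plug_eps_one] at heq
            obtain ⟨hfa, hts⟩ := node_inj heq
            subst hfa
            left
            have hrs' : rs = fun i => eps (i.1 + 1) := (eq_of_heq hts).symm
            subst hrs'
            have hrs2 : ∀ i, (eps (i.1 + 1) : GTree S ar) ∈ bsub b Y (ts i) := hrs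
            have hempty : ∀ i : Fin (ar α), False := by
              intro i
              have h2 := bsub_epsIdx hb hY (ts i) _ (hrs2 i)
              rw [hts0 i] at h2
              exact Multiset.singleton_ne_zero _ h2
            refine ⟨eps 1, rfl, ?_, by rw [bsub_eps]; rfl⟩
            rw [plug_eps_one, symTree]
            congr 1
            funext i
            exact absurd (hempty i) not_false
        | node g us =>
            rw [plug_node] at heq
            obtain ⟨hfg, hts⟩ := node_inj heq
            subst hfg
            have hrs' : rs = fun i => plug (symTree α) (us i) := (eq_of_heq hts).symm
            subst hrs'
            have hrs2 : ∀ i, plug (symTree α) (us i) ∈ bsub b Y (ts i) := hrs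
            rw [epsIdx_node] at hu
            obtain ⟨i₀, hi₀, hz⟩ := sum_eq_singleton hu
            have hother : ∀ i, i ≠ i₀ → us i ∈ bsub b Y (ts i) := by
              intro i hi
              have := hrs2 i
              rwa [plug_closed (hz i hi)] at this
            have hrec := bsub_decomp hb hY α (ts i₀) (hts0 i₀) (us i₀) hi₀ (hrs2 i₀)
            rcases hrec with ⟨a₀, ha₀e, ha₀p, ha₀m⟩ |
              ⟨m₀, hm₀e, hm₀p, w₀, hw₀, v, hve, hvY, hveq⟩
            · left
              refine ⟨node g (Function.update ts i₀ a₀),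
                epsIdx_update ha₀e (fun i hi => hts0 i), ?_, ?_⟩
              · rw [plug_node]
                congr 1
                funext i
                by_cases hi : i = i₀
                · subst hi; rw [Function.update_self]; exact ha₀p
                · rw [Function.update_of_ne hi, plug_closed (hts0 i)]
              · refine (mem_bsub_node_iff hf).mpr ⟨us, fun i => ?_, rfl⟩
                by_cases hi : i = i₀
                · subst hi; rw [Function.update_self]; exact ha₀m
                · rw [Function.update_of_ne hi]; exact hother i hi
            · right
              refine ⟨node g (Function.update ts i₀ m₀),
                epsIdx_update hm₀e (fun i hi => hts0 i), ?_,
                node g (Function.update us i₀ w₀),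
                (mem_bsub_node_iff hf).mpr ⟨Function.update us i₀ w₀, fun i => ?_, rfl⟩,
                v, hve, hvY, ?_⟩
              · rw [plug_node]
                congr 1
                funext i
                by_cases hi : i = i₀
                · subst hi; rw [Function.update_self]; exact hm₀p
                · rw [Function.update_of_ne hi, plug_closed (hts0 i)]
              · by_cases hi : i = i₀
                · subst hi; rw [Function.update_self, Function.update_self]; exact hw₀
                · rw [Function.update_of_ne hi, Function.update_of_ne hi]
                  exact hother i hi
              · rw [plug_node]
                congr 1
                funext i
                by_cases hi : i = i₀
                · subst hi; rw [Function.update_self]; exact hveq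
                · rw [Function.update_of_ne hi, plug_closed (hz i hi)]

end GTree
namespace GTree

variable {S : Type} {ar : S → ℕ} [DecidableEq S] {b : S} {L : Set (GTree S ar)}

theorem quot_iterB_decomp (hb : ar b = 0) (hL : ∀ t ∈ L, epsIdx t = 0) (α : S) :
    ∀ n, ∀ u : GTree S ar, epsIdx u = {1} → plug (symTree α) u ∈ iterB b L n →
      (α = b ∧ u = eps 1) ∨
      ∃ c ∈ closC 1 (quotL (symTree b) L), ∃ a ∈ quotL (symTree α) L,
        u ∈ bsub b (closB b L) (plug a c) := by
  have hM : ∀ m ∈ quotL (symTree b) L, epsIdx m = {1} :=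
    fun m hm => ((mem_quotL_closed hL).mp hm).1
  intro n
  induction n with
  | zero =>
      rintro u hu hmem
      replace hmem : plug (symTree α) u = symTree b := hmem
      left
      cases u with
      | eps x =>
          have hx : x = 1 := by simpa [epsIdx] using hu
          subst hx
          rw [plug_eps_one] at hmem
          obtain ⟨hab, -⟩ := node_inj hmem
          exact ⟨hab, rfl⟩
      | node g us =>
          rw [plug_node] at hmem
          obtain ⟨hgb, -⟩ := node_inj hmem
          subst hgb
          rw [epsIdx_node_zero hb] at hu
          exact absurd hu.symm (Multiset.singleton_ne_zero 1)
  | succ n ih =>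
      rintro u hu (hmem | hmem)
      · exact ih u hu hmem
      · simp only [prodB, Set.mem_iUnion] at hmem
        obtain ⟨l, hl, hmem⟩ := hmem
        rcases bsub_decomp hb (iterB_closed hb hL n) α l (hL l hl) u hu hmem with
          ⟨a, hae, hap, ham⟩ | ⟨m, hme, hmp, w, hwm, v, hve, hvY, hueq⟩
        · right
          refine ⟨eps 1, eps_one_mem_closC, a,
            (mem_quotL_closed hL).mpr ⟨hae, hap ▸ hl⟩, ?_⟩
          rw [plug_eps_one]
          exact bsub_mono (iterB_subset_closB n) a ham
        · have hmM : m ∈ quotL (symTree b) L := (mem_quotL_closed hL).mpr ⟨hme, hmp ▸ hl⟩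
          rcases ih v hve hvY with ⟨hab, hveq1⟩ | ⟨c, hcC, a, haA, hvB⟩
          · subst hab
            subst hveq1
            rw [eps_one_plug] at hueq
            right
            refine ⟨eps 1, eps_one_mem_closC, m, hmM, ?_⟩
            rw [plug_eps_one, hueq]
            exact bsub_mono (iterB_subset_closB n) m hwm
          · right
            refine ⟨plug c m, plug_closC_mem' hM hcC (M_subset_closC hM hmM), a, haA, ?_⟩
            rw [hueq, plug_plug]
            exact plug_mem_bsub hb (closB_closed hb hL) m w
              (bsub_mono (iterB_subset_closB n) m hwm) (plug a c) v hvB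

end GTree

open GTree in
/-- quotient of the `b`-closure `L^{*_b}` of a 0-homogeneous language. -/
theorem quotient_closB {S : Type} {ar : S → ℕ} [DecidableEq S] (b : S)
    (hb : ar b = 0) (L : Set (GTree S ar)) (hL : ∀ t ∈ L, epsIdx t = 0) (α : S) :
    (α = b →
      quotL (symTree b) (closB b L) =
        prodB (closC 1 (quotL (symTree b) L)) b (closB b L)) ∧
    (α ≠ b →
      quotL (symTree α) (closB b L) =
        prodB (pcompL (closC 1 (quotL (symTree b) L)) (quotL (symTree α) L)) b
          (closB b L)) := by
  classical
  have hcl : ∀ y ∈ closB b L, epsIdx y = 0 := closB_closed hb hL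
  have hM : ∀ m ∈ quotL (symTree b) L, epsIdx m = {1} :=
    fun m hm => ((mem_quotL_closed hL).mp hm).1
  constructor
  · rintro rfl
    ext u
    rw [mem_quotL_closed hcl]
    simp only [prodB, Set.mem_iUnion]
    constructor
    · rintro ⟨hu, hmem⟩
      obtain ⟨n, hn⟩ := Set.mem_iUnion.mp hmem
      rcases quot_iterB_decomp hb hL α n u hu hn with ⟨-, rfl⟩ | ⟨c, hc, a, ha, humem⟩
      · exact ⟨eps 1, eps_one_mem_closC, by rw [bsub_eps]; rfl⟩
      · exact ⟨plug a c, plug_closC_mem' hM (M_subset_closC hM ha) hc, humem⟩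
    · rintro ⟨c, hc, humem⟩
      obtain ⟨n, hcn⟩ := Set.mem_iUnion.mp hc
      refine ⟨(bsub_epsIdx hb hcl c u humem).trans (iterC_epsIdx hM n c hcn), ?_⟩
      exact plug_bsub_closB hb hL n c hcn u humem (symTree α) symTree_mem_closB
  · rintro hab
    ext u
    rw [mem_quotL_closed hcl]
    simp only [prodB, pcompL, Set.mem_iUnion]
    constructor
    · rintro ⟨hu, hmem⟩
      obtain ⟨n, hn⟩ := Set.mem_iUnion.mp hmem
      rcases quot_iterB_decomp hb hL α n u hu hn with ⟨hab', -⟩ | ⟨c, hc, a, ha, humem⟩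
      · exact absurd hab' hab
      · exact ⟨plug a c, ⟨c, hc,
          (mem_pcomp_iff (closC_epsIdx hM c hc)).mpr ⟨a, ha, rfl⟩⟩, humem⟩
    · rintro ⟨x, hx, humem⟩
      obtain ⟨c, hc, hxp⟩ := hx
      obtain ⟨a, ha, rfl⟩ := (mem_pcomp_iff (closC_epsIdx hM c hc)).mp hxp
      obtain ⟨hae, hap⟩ := (mem_quotL_closed hL).mp ha
      obtain ⟨n, hcn⟩ := Set.mem_iUnion.mp hc
      have hxe : epsIdx (plug a c) = {1} := by
        rw [epsIdx_plug a (closC_epsIdx hM c hc)]; exact hae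
      have hue : epsIdx u = {1} := (bsub_epsIdx hb hcl _ u humem).trans hxe
      refine ⟨hue, ?_⟩
      obtain ⟨w, hw, v, hv, rfl⟩ :=
        bsub_plug_elim hb hcl c (closC_epsIdx hM c hc) a u humem
      rw [plug_plug]
      have ht₀ : plug (symTree α) v ∈ closB b L := by
        refine bsub_closB_subset hap ?_
        exact plug_mem_bsub hb hcl a v hv (symTree α) (symTree α)
          (self_mem_bsub hb symTree_mem_closB (symTree α))
      exact plug_bsub_closB hb hL n c hcn w hw (plug (symTree α) v) ht₀
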